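/- The cohomology of the dg-algebra (A_θ, d) is independent of θ as a graded algebra: H(A_θ) is isomorphic to the commutative algebra Z = ker d ∩ ker d*, where d*(a_0 + a_i ξ^i) = x^i a_i(x), and Z does not depend on θ. In particular H(A_θ) ≅ H(A_{θ'}) for any antisymmetric θ, θ'. -/

import Mathlib

open MvPolynomial TensorProduct

noncomputable def moyalD (n : ℕ) (θ : Matrix (Fin n) (Fin n) ℝ) :
    Module.End ℝ (MvPolynomial (Fin n) ℝ ⊗[ℝ] MvPolynomial (Fin n) ℝ) :=
  ∑ i : Fin n, ∑ j : Fin n,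
    θ i j • (TensorProduct.map (pderiv i).toLinearMap (pderiv j).toLinearMap)

/-- The Moyal–Weyl star product; the exponential series terminates on polynomials. -/
noncomputable def moyal (n : ℕ) (θ : Matrix (Fin n) (Fin n) ℝ)
    (f g : MvPolynomial (Fin n) ℝ) : MvPolynomial (Fin n) ℝ :=
  ∑ k ∈ Finset.range (f.totalDegree + 1),
    (((1 : ℝ) / 2) ^ k / (Nat.factorial k)) •
      (LinearMap.mul' ℝ (MvPolynomial (Fin n) ℝ)) ((moyalD n θ ^ k) (f ⊗ₜ[ℝ] g))

/-- By the PBW property, elements of the dg-algebra `A_θ` are represented as pairs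
`(a₀, a)` standing for `a₀(x) + a_i(x)ξⁱ`. -/
abbrev Apair (n : ℕ) := MvPolynomial (Fin n) ℝ × (Fin n → MvPolynomial (Fin n) ℝ)

/-- The product on `A_θ`: the Moyal–Weyl formula followed by the projection onto
terms at most linear in the ξ's (recall `ξⁱξʲ = 0` and the ξ's are central). -/
noncomputable def starPair (n : ℕ) (θ : Matrix (Fin n) (Fin n) ℝ)
    (a b : Apair n) : Apair n :=
  (moyal n θ a.1 b.1, fun i => moyal n θ a.1 (b.2 i) + moyal n θ (a.2 i) b.1)

/-- The differential `d(a₀ + a_i ξⁱ) = (∂_i a₀) ξⁱ`. -/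
noncomputable def dPair (n : ℕ) (a : Apair n) : Apair n :=
  (0, fun i => pderiv i a.1)

/-- The degree `−1` operator `d*(a₀ + a_iξⁱ) = xⁱ a_i(x)`. -/
noncomputable def dStar (n : ℕ) (a : Apair n) : MvPolynomial (Fin n) ℝ :=
  ∑ i : Fin n, X i * a.2 i

/-- The subspace `Z = ker d ∩ ker d*`. -/
def Zsub (n : ℕ) : Set (Apair n) :=
  {a | (∀ i : Fin n, pderiv i a.1 = 0) ∧ (∑ i : Fin n, X i * a.2 i) = 0}

/-!
On `ker d` the component `a₀` is a constant, so every bidifferential term of the Moyal series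
vanishes and the product on `Z` is the classical, θ-free product. Cohomology is controlled by
the homotopy `d* d = E`, where `E = xⁱ ∂ᵢ` is the Euler operator: it multiplies a monomial of
degree `k` by `k`, hence is injective modulo constants and surjective onto polynomials without
constant term. Subtracting `d E⁻¹(d* a)` from a cocycle `a` lands it in `Z`, and an exact
`z = d c ∈ Z` has `E c₀ = d* z = 0`, so `c₀` is constant and `z = 0`.
-/

namespace MvPolynomial

section Euler

variable {σ R K : Type*} [Fintype σ] [CommSemiring R]

noncomputable def euler : MvPolynomial σ R →ₗ[R] MvPolynomial σ R :=
  ∑ i, LinearMap.mulLeft R (X i) ∘ₗ (pderiv i).toLinearMap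

lemma euler_apply (f : MvPolynomial σ R) : euler f = ∑ i, X i * pderiv i f := by
  simp [euler]

lemma euler_monomial (d : σ →₀ ℕ) (r : R) : euler (monomial d r) = d.degree • monomial d r := by
  simp_rw [euler_apply, X_mul_pderiv_monomial, ← Finset.sum_smul, Finsupp.degree_eq_sum]

lemma coeff_euler (f : MvPolynomial σ R) (e : σ →₀ ℕ) :
    coeff e (euler f) = e.degree • coeff e f := by
  induction f using induction_on' with
  | monomial d r =>
    classical
    rw [euler_monomial, coeff_smul, coeff_monomial]
    split_ifs with h
    · rw [h]
    · simp only [smul_zero]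
  | add p q hp hq => rw [map_add, coeff_add, coeff_add, hp, hq, smul_add]

lemma eq_C_of_euler_eq_zero [IsAddTorsionFree R] {f : MvPolynomial σ R} (h : euler f = 0) :
    f = C (constantCoeff f) := by
  classical
  ext e
  rw [coeff_C, constantCoeff_eq]
  split_ifs with he
  · rw [he]
  · have hdeg : e.degree ≠ 0 := fun h0 => he ((Finsupp.degree_eq_zero_iff e).mp h0).symm
    have hcoeff := coeff_euler f e
    rw [h, coeff_zero, ← smul_zero e.degree] at hcoeff
    exact nsmul_right_injective hdeg hcoeff.symm

lemma eq_C_of_forall_pderiv_eq_zero [IsAddTorsionFree R] {f : MvPolynomial σ R}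
    (h : ∀ i, pderiv i f = 0) : f = C (constantCoeff f) :=
  eq_C_of_euler_eq_zero (by simp [euler_apply, h])

lemma exists_euler_eq [Field K] [CharZero K] {q : MvPolynomial σ K} (hq : constantCoeff q = 0) :
    ∃ g, euler g = q := by
  refine ⟨∑ d ∈ q.support, monomial d ((d.degree : K)⁻¹ * coeff d q), ?_⟩
  conv_rhs => rw [q.as_sum]
  rw [map_sum]
  refine Finset.sum_congr rfl fun d hd => ?_
  have hd0 : d ≠ 0 := by
    rintro rfl
    exact mem_support_iff.mp hd (by rwa [← constantCoeff_eq])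
  have hdeg : (d.degree : K) ≠ 0 := by
    exact_mod_cast fun h0 => hd0 ((Finsupp.degree_eq_zero_iff d).mp h0)
  rw [euler_monomial, smul_monomial, nsmul_eq_mul, ← mul_assoc, mul_inv_cancel₀ hdeg, one_mul]

end Euler

end MvPolynomial

variable {n : ℕ}

lemma constantCoeff_dStar (a : Apair n) : constantCoeff (dStar n a) = 0 := by
  simp [dStar, constantCoeff_X]

lemma dStar_sub (a b : Apair n) : dStar n (a - b) = dStar n a - dStar n b := by
  simp [dStar, mul_sub]

lemma dStar_dPair (c : Apair n) : dStar n (dPair n c) = euler c.1 :=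
  (euler_apply c.1).symm

lemma moyal_eq_mul_of_pderiv_left_eq_zero (θ : Matrix (Fin n) (Fin n) ℝ)
    {f : MvPolynomial (Fin n) ℝ} (g : MvPolynomial (Fin n) ℝ) (hf : ∀ i, pderiv i f = 0) :
    moyal n θ f g = f * g := by
  have hdeg : f.totalDegree = 0 := by
    rw [eq_C_of_forall_pderiv_eq_zero hf, totalDegree_C]
  simp [moyal, hdeg, LinearMap.mul'_apply]

lemma moyal_eq_mul_of_pderiv_right_eq_zero (θ : Matrix (Fin n) (Fin n) ℝ)
    (f : MvPolynomial (Fin n) ℝ) {g : MvPolynomial (Fin n) ℝ} (hg : ∀ j, pderiv j g = 0) :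
    moyal n θ f g = f * g := by
  have hD : moyalD n θ (f ⊗ₜ[ℝ] g) = 0 := by
    simp [moyalD, LinearMap.sum_apply, TensorProduct.map_tmul, hg]
  have hDpow : ∀ k, (moyalD n θ ^ (k + 1)) (f ⊗ₜ[ℝ] g) = 0 := fun k => by
    rw [pow_succ, Module.End.mul_apply, hD, map_zero]
  simp [moyal, Finset.sum_range_succ', hDpow, LinearMap.mul'_apply]

lemma starPair_eq_of_pderiv_fst_eq_zero (θ : Matrix (Fin n) (Fin n) ℝ) {a b : Apair n}
    (ha : ∀ i, pderiv i a.1 = 0) (hb : ∀ i, pderiv i b.1 = 0) :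
    starPair n θ a b = (a.1 * b.1, fun i => a.1 * b.2 i + a.2 i * b.1) := by
  simp only [starPair, moyal_eq_mul_of_pderiv_left_eq_zero θ _ ha,
    moyal_eq_mul_of_pderiv_right_eq_zero θ _ hb]

lemma starPair_mem_Zsub (θ : Matrix (Fin n) (Fin n) ℝ) {a b : Apair n}
    (ha : a ∈ Zsub n) (hb : b ∈ Zsub n) : starPair n θ a b ∈ Zsub n := by
  rw [starPair_eq_of_pderiv_fst_eq_zero θ ha.1 hb.1]
  refine ⟨fun i => by simp [ha.1 i, hb.1 i], ?_⟩
  calc ∑ i, X i * (a.1 * b.2 i + a.2 i * b.1)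
      = a.1 * ∑ i, X i * b.2 i + (∑ i, X i * a.2 i) * b.1 := by
        simp only [Finset.mul_sum, Finset.sum_mul, ← Finset.sum_add_distrib]
        exact Finset.sum_congr rfl fun i _ => by ring
    _ = 0 := by rw [ha.2, hb.2, mul_zero, zero_mul, add_zero]

lemma starPair_comm_of_mem_Zsub (θ : Matrix (Fin n) (Fin n) ℝ) {a b : Apair n}
    (ha : a ∈ Zsub n) (hb : b ∈ Zsub n) : starPair n θ a b = starPair n θ b a := by
  rw [starPair_eq_of_pderiv_fst_eq_zero θ ha.1 hb.1, starPair_eq_of_pderiv_fst_eq_zero θ hb.1 ha.1]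
  exact Prod.ext (mul_comm _ _) (funext fun i => by ring)

lemma exists_mem_Zsub_add_dPair {a : Apair n} (ha : dPair n a = 0) :
    ∃ z ∈ Zsub n, ∃ c : Apair n, a = z + dPair n c := by
  obtain ⟨g, hg⟩ := exists_euler_eq (constantCoeff_dStar a)
  refine ⟨a - dPair n (g, 0), ⟨fun i => ?_, ?_⟩, (g, 0), (sub_add_cancel _ _).symm⟩
  · simpa [dPair] using congrFun (congrArg Prod.snd ha) i
  · change dStar n (a - dPair n (g, 0)) = 0
    rw [dStar_sub, dStar_dPair, hg, sub_self]

lemma eq_zero_of_mem_Zsub_of_eq_dPair {z c : Apair n} (hz : z ∈ Zsub n) (hc : z = dPair n c) :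
    z = 0 := by
  have hE : euler c.1 = 0 := by
    rw [← dStar_dPair, ← hc]
    exact hz.2
  have hc₀ : ∀ i, pderiv i c.1 = 0 := fun i => by
    rw [eq_C_of_euler_eq_zero hE, pderiv_C]
  rw [hc]
  exact Prod.ext rfl (funext hc₀)

theorem cohomology_independent_of_theta_general (n : ℕ)
    (θ θ' : Matrix (Fin n) (Fin n) ℝ) :
    (∀ a ∈ Zsub n, ∀ b ∈ Zsub n, starPair n θ a b ∈ Zsub n) ∧
    (∀ a ∈ Zsub n, ∀ b ∈ Zsub n, starPair n θ a b = starPair n θ' a b) ∧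
    (∀ a ∈ Zsub n, ∀ b ∈ Zsub n, starPair n θ a b = starPair n θ b a) ∧
    (∀ a : Apair n, dPair n a = 0 → ∃ z ∈ Zsub n, ∃ c : Apair n, a = z + dPair n c) ∧
    (∀ z ∈ Zsub n, (∃ c : Apair n, z = dPair n c) → z = 0) :=
  ⟨fun _ ha _ hb => starPair_mem_Zsub θ ha hb,
    fun _ ha _ hb => (starPair_eq_of_pderiv_fst_eq_zero θ ha.1 hb.1).trans
      (starPair_eq_of_pderiv_fst_eq_zero θ' ha.1 hb.1).symm,
    fun _ ha _ hb => starPair_comm_of_mem_Zsub θ ha hb,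
    fun _ ha => exists_mem_Zsub_add_dPair ha,
    fun _ hz ⟨_, hc⟩ => eq_zero_of_mem_Zsub_of_eq_dPair hz hc⟩

theorem cohomology_independent_of_theta (n : ℕ)
    (θ θ' : Matrix (Fin n) (Fin n) ℝ)
    (hθ : ∀ i j, θ j i = -θ i j) (hθ' : ∀ i j, θ' j i = -θ' i j) :
    (∀ a ∈ Zsub n, ∀ b ∈ Zsub n, starPair n θ a b ∈ Zsub n) ∧
    (∀ a ∈ Zsub n, ∀ b ∈ Zsub n, starPair n θ a b = starPair n θ' a b) ∧
    (∀ a ∈ Zsub n, ∀ b ∈ Zsub n, starPair n θ a b = starPair n θ b a) ∧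
    (∀ a : Apair n, dPair n a = 0 → ∃ z ∈ Zsub n, ∃ c : Apair n, a = z + dPair n c) ∧
    (∀ z ∈ Zsub n, (∃ c : Apair n, z = dPair n c) → z = 0) :=
  cohomology_independent_of_theta_general n θ θ'
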